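/- Let q be a prime power, k ≥ 3, s ≥ 0, and let K be an (n, k+s-1)-multi-arc in PG(k-1,q). If some (k-3)-flat of PG(k-1,q) contains at least k-1 points of K (counted with multiplicity), then n ≤ s(q+1) + k - 1. -/

import Mathlib

open scoped Classical

noncomputable section

/-- The number of points of the multiset `K` of projective points lying in the
submodule (flat) `W`, counted with multiplicity. -/
def mPointsOn {F V : Type*} [Field F] [AddCommGroup V] [Module F V]
    (K : Multiset (Projectivization F V)) (W : Submodule F V) : ℕ :=
  Multiset.card (K.filter (fun P => P.submodule ≤ W))

/-- The number of points of the finite set `K` of projective points lying in the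
submodule (flat) `W`. -/
def pointsOn {F V : Type*} [Field F] [AddCommGroup V] [Module F V]
    (K : Finset (Projectivization F V)) (W : Submodule F V) : ℕ :=
  (K.filter (fun P => P.submodule ≤ W)).card

/-- `W` is a hyperplane of the projective space `PG(V)`, i.e. a linear subspace of
codimension one (projective codimension one flat). -/
def IsHyp (F : Type*) [Field F] {V : Type*} [AddCommGroup V] [Module F V]
    (W : Submodule F V) : Prop :=
  Module.finrank F W = Module.finrank F V - 1

/-- An `(n, r)`-multi-arc: a multiset of `n > r` projective points such that every
hyperplane contains at most `r` of them (with multiplicity) and some hyperplane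
contains exactly `r` of them. -/
def IsMultiArc {F V : Type*} [Field F] [AddCommGroup V] [Module F V]
    (n r : ℕ) (K : Multiset (Projectivization F V)) : Prop :=
  Multiset.card K = n ∧ r < n ∧
    (∀ W : Submodule F V, IsHyp F W → mPointsOn K W ≤ r) ∧
    (∃ W : Submodule F V, IsHyp F W ∧ mPointsOn K W = r)

/-- An `(n, r)`-arc: a set of `n > r` projective points such that every hyperplane
contains at most `r` of them and some hyperplane contains exactly `r` of them. -/
def IsArc {F V : Type*} [Field F] [AddCommGroup V] [Module F V]
    (n r : ℕ) (K : Finset (Projectivization F V)) : Prop :=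
  K.card = n ∧ r < n ∧
    (∀ W : Submodule F V, IsHyp F W → pointsOn K W ≤ r) ∧
    (∃ W : Submodule F V, IsHyp F W ∧ pointsOn K W = r)

/-- A complete `(n, r)`-arc: one admitting no extension to an `(n+1, r)`-arc. -/
def IsCompleteArc {F V : Type*} [Field F] [AddCommGroup V] [Module F V]
    (n r : ℕ) (K : Finset (Projectivization F V)) : Prop :=
  IsArc n r K ∧ ∀ P ∉ K, ¬ IsArc (n + 1) r (insert P K)

/-- A hyperplane is a secant of the arc `K` (relative to the parameter `r`) if it
contains exactly `r` points of `K`. -/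
def IsSecant {F V : Type*} [Field F] [AddCommGroup V] [Module F V]
    (K : Finset (Projectivization F V)) (r : ℕ) (W : Submodule F V) : Prop :=
  IsHyp F W ∧ pointsOn K W = r

/-- A hyperplane is a tangent of the arc `K` (relative to the parameter `r`) if it
contains a positive number, fewer than `r`, of points of `K`. -/
def IsTangent {F V : Type*} [Field F] [AddCommGroup V] [Module F V]
    (K : Finset (Projectivization F V)) (r : ℕ) (W : Submodule F V) : Prop :=
  IsHyp F W ∧ 0 < pointsOn K W ∧ pointsOn K W < r

/-- `m^s(k,q)`: the maximum size of a complete `(n, k+s-1)`-arc in `PG(k-1,q)`,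
where the projective space is coordinatized over the field `F` of order `q`. -/
def mPow (F : Type*) [Field F] (k s : ℕ) : ℕ :=
  sSup {n | ∃ K : Finset (Projectivization F (Fin k → F)), IsCompleteArc n (k + s - 1) K}


open Module Submodule

section Aux

variable {F : Type*} [Field F] [Fintype F]

/-- Fibers of `mk'` are in bijection with `Fˣ`. -/
lemma fiber_equiv_units {M : Type*} [AddCommGroup M] [Module F M]
    (x : Projectivization F M) :
    Nonempty (Fˣ ≃ {v : {w : M // w ≠ 0} // Projectivization.mk' F v = x}) := by
  refine ⟨Equiv.ofBijective (fun a => ⟨⟨a • x.rep, ?_⟩, ?_⟩) ⟨?_, ?_⟩⟩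
  · simp [Units.smul_def, smul_eq_zero, x.rep_nonzero, Units.ne_zero]
  · rw [Projectivization.mk'_eq_mk]
    have : Projectivization.mk F ((a : F) • x.rep) (by
        simp [smul_eq_zero, x.rep_nonzero, a.ne_zero]) = Projectivization.mk F x.rep x.rep_nonzero :=
      (Projectivization.mk_eq_mk_iff F _ _ _ x.rep_nonzero).2 ⟨a, rfl⟩
    simpa [Units.smul_def] using this.trans x.mk_rep
  · intro a b hab
    have h : (a : F) • x.rep = (b : F) • x.rep := by
      have := congrArg (fun z => ((z : {w : M // w ≠ 0}) : M)) (congrArg Subtype.val hab)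
      simpa [Units.smul_def] using this
    exact Units.ext (smul_left_injective F x.rep_nonzero h)
  · rintro ⟨⟨v, hv⟩, h⟩
    rw [Projectivization.mk'_eq_mk] at h
    obtain ⟨a, ha⟩ := (Projectivization.mk_eq_mk_iff F v x.rep hv x.rep_nonzero).1
      (h.trans x.mk_rep.symm)
    exact ⟨a, by ext; simpa [Units.smul_def] using ha⟩

/-- The projectivization of a 2-dimensional space over a field with `q` elements
has `q + 1` points. -/
lemma card_proj_two {M : Type*} [AddCommGroup M] [Module F M] [Fintype M]
    [Fintype (Projectivization F M)] (h2 : finrank F M = 2) :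
    Fintype.card (Projectivization F M) = Fintype.card F + 1 := by
  classical
  have cardM : Fintype.card M = Fintype.card F * Fintype.card F := by
    rw [card_eq_pow_finrank (K := F) (V := M), h2, sq]
  have cardS : Fintype.card {w : M // w ≠ 0}
      = Fintype.card F * Fintype.card F - 1 := by
    rw [Fintype.card_subtype_compl (fun w : M => w = 0)]
    simp [cardM, Fintype.card_subtype_eq (0 : M)]
  have key : Fintype.card {w : M // w ≠ 0}
      = Fintype.card (Projectivization F M) * (Fintype.card F - 1) := by
    rw [← Fintype.card_congr (Equiv.sigmaFiberEquiv (Projectivization.mk' F))]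
    rw [Fintype.card_sigma]
    have h : ∀ x : Projectivization F M,
        Fintype.card {v : {w : M // w ≠ 0} // Projectivization.mk' F v = x}
          = Fintype.card F - 1 := by
      intro x
      obtain ⟨e⟩ := fiber_equiv_units x
      rw [← Fintype.card_congr e, Fintype.card_units]
    simp only [h, Finset.sum_const, smul_eq_mul, Finset.card_univ, mul_comm]
  have hq2 : 2 ≤ Fintype.card F := Fintype.one_lt_card
  have hfac : (Fintype.card F + 1) * (Fintype.card F - 1)
      = Fintype.card F * Fintype.card F - 1 := by
    obtain ⟨m, hm⟩ : ∃ m, Fintype.card F = m + 1 := ⟨Fintype.card F - 1, by omega⟩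
    rw [hm]
    simp only [Nat.add_sub_cancel]
    exact (Nat.sub_eq_of_eq_add (by ring)).symm
  have : Fintype.card (Projectivization F M) * (Fintype.card F - 1)
      = (Fintype.card F + 1) * (Fintype.card F - 1) := by
    rw [← key, cardS, hfac]
  exact Nat.eq_of_mul_eq_mul_right (by omega) this

end Aux

section Main

variable {F : Type*} [Field F] [Fintype F]

def mPointsOn' {V : Type*} [AddCommGroup V] [Module F V]
    (K : Multiset (Projectivization F V)) (W : Submodule F V) : ℕ :=
  Multiset.card (K.filter (fun P => P.submodule ≤ W))

/-- finrank of the preimage of a line under the quotient map. -/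
lemma finrank_comap_mkQ {V : Type*} [AddCommGroup V] [Module F V]
    [FiniteDimensional F V] (W : Submodule F V) (L : Submodule F (V ⧸ W))
    (hL : finrank F L = 1) :
    finrank F (L.comap W.mkQ) = finrank F W + 1 := by
  set M := L.comap W.mkQ with hM
  have hWM : W ≤ M := by
    intro x hx
    simp only [hM, Submodule.mem_comap, Submodule.mkQ_apply]
    rw [(Submodule.Quotient.mk_eq_zero W).2 hx]
    exact L.zero_mem
  set f := W.mkQ.domRestrict M with hf
  have hrange : LinearMap.range f = L := by
    rw [hf, LinearMap.range_domRestrict, hM, Submodule.map_comap_eq,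
      Submodule.range_mkQ, top_inf_eq]
  have hker : LinearMap.ker f = W.comap M.subtype := by
    rw [hf, LinearMap.ker_domRestrict, Submodule.ker_mkQ]
  have h1 : finrank F (LinearMap.range f) + finrank F (LinearMap.ker f)
      = finrank F M := LinearMap.finrank_range_add_finrank_ker f
  rw [hrange, hker, hL] at h1
  have h2 : finrank F (W.comap M.subtype) = finrank F W :=
    (Submodule.comapSubtypeEquivOfLe hWM).finrank_eq
  omega

lemma sum_mPointsOn {V : Type*} [AddCommGroup V] [Module F V]
    {ι : Type*} [Fintype ι] (K : Multiset (Projectivization F V))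
    (H : ι → Submodule F V) :
    ∑ x : ι, mPointsOn' K (H x)
      = (K.map fun P => (Finset.univ.filter fun x => P.submodule ≤ H x).card).sum := by
  classical
  induction K using Multiset.induction with
  | empty => simp [mPointsOn']
  | cons a K ih =>
    have step : ∀ x, mPointsOn' (a ::ₘ K) (H x)
        = (if a.submodule ≤ H x then 1 else 0) + mPointsOn' K (H x) := by
      intro x
      simp only [mPointsOn', Multiset.filter_cons]
      rw [Multiset.card_add]
      congr 1
      split <;> simp
    simp only [step, Finset.sum_add_distrib, ih, Multiset.map_cons, Multiset.sum_cons]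
    congr 1
    rw [Finset.sum_boole]
    simp

end Main

section Main2

variable {F : Type*} [Field F] [Fintype F]

lemma count_lines {V : Type*} [AddCommGroup V] [Module F V] (W : Submodule F V)
    [Fintype (Projectivization F (V ⧸ W))] (P : Projectivization F V) :
    (Finset.univ.filter fun x : Projectivization F (V ⧸ W) =>
        P.submodule ≤ (x.submodule).comap W.mkQ).card
      = if P.submodule ≤ W then Fintype.card (Projectivization F (V ⧸ W)) else 1 := by
  classical
  induction P using Projectivization.ind with
  | h v hv =>
  rw [Projectivization.submodule_mk]
  by_cases hvW : v ∈ W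
  · rw [if_pos (Submodule.span_singleton_le_iff_mem v W |>.2 hvW)]
    rw [Finset.filter_true_of_mem, Finset.card_univ]
    intro x _
    rw [Submodule.span_singleton_le_iff_mem, Submodule.mem_comap, Submodule.mkQ_apply,
      (Submodule.Quotient.mk_eq_zero W).2 hvW]
    exact zero_mem _
  · have hv0 : W.mkQ v ≠ 0 := by
      rw [Submodule.mkQ_apply]
      exact fun h => hvW ((Submodule.Quotient.mk_eq_zero W).1 h)
    rw [if_neg (fun h => hvW ((Submodule.span_singleton_le_iff_mem v W).1 h))]
    have key : ∀ x : Projectivization F (V ⧸ W),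
        ((F ∙ v) ≤ (x.submodule).comap W.mkQ) ↔ x = Projectivization.mk F (W.mkQ v) hv0 := by
      intro x
      rw [Submodule.span_singleton_le_iff_mem, Submodule.mem_comap]
      constructor
      · intro hmem
        rw [Projectivization.submodule_eq, Submodule.mem_span_singleton] at hmem
        obtain ⟨a, ha⟩ := hmem
        rw [← x.mk_rep]
        exact ((Projectivization.mk_eq_mk_iff' F _ _ hv0 x.rep_nonzero).2 ⟨a, ha⟩).symm
      · rintro rfl
        rw [Projectivization.submodule_mk]
        exact Submodule.mem_span_singleton_self _
    rw [Finset.filter_congr (fun x _ => by rw [key x])]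
    have h1 : (Finset.filter (fun x => x = Projectivization.mk F (W.mkQ v) hv0) Finset.univ)
        = {Projectivization.mk F (W.mkQ v) hv0} := by
      ext x; simp only [Finset.mem_filter, Finset.mem_univ, true_and, Finset.mem_singleton]
    rw [h1, Finset.card_singleton]

end Main2

/-- If some `(k-3)`-flat (a submodule of linear dimension `k-2`) contains at least
`k-1` points of an `(n, k+s-1)`-multi-arc `K` in `PG(k-1,q)` counted with
multiplicity, then `n ≤ s(q+1) + k - 1`. -/

theorem stmt5 {F : Type*} [Field F] [Fintype F] {q k s n : ℕ}
    (hq : Fintype.card F = q) (hk : 3 ≤ k)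
    (K : Multiset (Projectivization F (Fin k → F)))
    (hK : IsMultiArc n (k + s - 1) K)
    (W : Submodule F (Fin k → F)) (hW : Module.finrank F W = k - 2)
    (hWK : k - 1 ≤ mPointsOn K W) :
    n ≤ s * (q + 1) + k - 1 := by
  classical
  obtain ⟨hcard, hrn, hhyp, -⟩ := hK
  haveI : Finite ((Fin k → F) ⧸ W) := Quotient.finite _
  haveI : Fintype ((Fin k → F) ⧸ W) := Fintype.ofFinite _
  haveI : Finite (Projectivization F ((Fin k → F) ⧸ W)) := Quotient.finite _
  haveI : Fintype (Projectivization F ((Fin k → F) ⧸ W)) := Fintype.ofFinite _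
  have hkV : Module.finrank F (Fin k → F) = k := Module.finrank_fin_fun F
  have hQ2 : Module.finrank F ((Fin k → F) ⧸ W) = 2 := by
    have h0 := W.finrank_quotient_add_finrank
    rw [hW, hkV] at h0
    omega
  have hc : Fintype.card (Projectivization F ((Fin k → F) ⧸ W)) = q + 1 := by
    rw [card_proj_two hQ2, hq]
  set H : Projectivization F ((Fin k → F) ⧸ W) → Submodule F (Fin k → F) :=
    fun x => (x.submodule).comap W.mkQ with hH
  have hHyp : ∀ x, IsHyp F (H x) := by
    intro x
    show Module.finrank F (H x) = Module.finrank F (Fin k → F) - 1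
    rw [hH, finrank_comap_mkQ W _ x.finrank_submodule, hW, hkV]
    omega
  -- total sum over the q+1 hyperplanes through W
  have upper : ∑ x, mPointsOn' K (H x) ≤ (q + 1) * (k + s - 1) := by
    calc ∑ x, mPointsOn' K (H x) ≤ ∑ _x : Projectivization F ((Fin k → F) ⧸ W), (k + s - 1) :=
          Finset.sum_le_sum fun x _ => hhyp (H x) (hHyp x)
      _ = (q + 1) * (k + s - 1) := by
          rw [Finset.sum_const, smul_eq_mul, Finset.card_univ, hc]
  have sum_eq : ∑ x, mPointsOn' K (H x)
      = (K.map fun P => if P.submodule ≤ W then q + 1 else 1).sum := by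
    rw [sum_mPointsOn K H]
    refine congrArg Multiset.sum (Multiset.map_congr rfl fun P _ => ?_)
    rw [hH]
    rw [count_lines W P, hc]
  set p : Projectivization F (Fin k → F) → Prop := fun P => P.submodule ≤ W with hp
  set a := Multiset.card (K.filter p) with ha
  set b := Multiset.card (K.filter fun P => ¬ p P) with hb
  have hsplit : K.filter p + K.filter (fun P => ¬ p P) = K := Multiset.filter_add_not p K
  have hab : a + b = n := by
    rw [ha, hb, ← Multiset.card_add, hsplit, hcard]
  have haW : k - 1 ≤ a := hWK
  have hsum : (K.map fun P => if P.submodule ≤ W then q + 1 else 1).sum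
      = a * (q + 1) + b := by
    conv_lhs => rw [← hsplit]
    rw [Multiset.map_add, Multiset.sum_add]
    congr 1
    · rw [show (Multiset.map (fun P => if P.submodule ≤ W then q + 1 else 1) (K.filter p))
            = Multiset.map (fun _ => q + 1) (K.filter p) from
          Multiset.map_congr rfl fun P hP => if_pos (Multiset.of_mem_filter hP),
        Multiset.map_const', Multiset.sum_replicate, smul_eq_mul, ha]
    · rw [show (Multiset.map (fun P => if P.submodule ≤ W then q + 1 else 1)
              (K.filter fun P => ¬ p P))
            = Multiset.map (fun _ => 1) (K.filter fun P => ¬ p P) from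
          Multiset.map_congr rfl fun P hP => if_neg ((Multiset.mem_filter.1 hP).2),
        Multiset.map_const', Multiset.sum_replicate, smul_eq_mul, hb, mul_one]
  have main : a * (q + 1) + b ≤ (q + 1) * ((k - 1) + s) := by
    have : (k + s - 1) = (k - 1) + s := by omega
    rw [← this, ← hsum, ← sum_eq]
    exact upper
  have e2 : (q + 1) * ((k - 1) + s) = (k - 1) + q * (k - 1) + s * (q + 1) := by ring
  have e3 : a * (q + 1) = a + q * a := by ring
  have e4 : q * (k - 1) ≤ q * a := Nat.mul_le_mul_left q haW
  rw [e2, e3] at main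
  generalize s * (q + 1) = Z at main ⊢
  generalize q * (k - 1) = X at main e4
  generalize q * a = Y at main e4
  omega


end
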